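/- arXiv:2201.13383 — 2 statements merged into one kernel-verified Lean document; each statement's English description precedes it below -/
import Mathlib

section
/- Let g : H → ℝ be a differentiable strictly convex function on a Hilbert space H inducing the Bregman distance D_g(x, y) = g(x) − g(y) − ⟨∇g(y), x − y⟩, and let f : H → ℝ be proper convex lower semicontinuous. Define T(x) = argmin_u [ f(u) + D_g(u, x) ] (assumed to exist and be single-valued). Then T is D-firm: for all x, y ∈ H, ⟨T x − T y, ∇g(T x) − ∇g(T y)⟩ ≤ ⟨T x − T y, ∇g(x) − ∇g(y)⟩. -/
/-!
Optimality of `T x` for the convex function `f + D(·, x)`, whose smooth part has gradient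
`∇g(T x) - ∇g(x)` at `T x`, gives the variational inequality
`f (T x) - f w ≤ ⟪∇g(T x) - ∇g(x), w - T x⟫` for all `w`. Adding its instances at `(x, T y)` and
`(y, T x)` cancels `f` and leaves exactly D-firmness.
-/

open InnerProductSpace
open scoped RealInnerProductSpace
open Set

theorem ConvexOn.sub_le_of_isMinOn_add {E : Type*} [NormedAddCommGroup E] [NormedSpace ℝ E]
    {s : Set E} {f h : E → ℝ} {h' : StrongDual ℝ E} {u w : E}
    (hf : ConvexOn ℝ s f) (hh : HasFDerivAt h h' u) (hmin : IsMinOn (f + h) s u)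
    (hu : u ∈ s) (hw : w ∈ s) :
    f u - f w ≤ h' (w - u) := by
  set φ : ℝ → ℝ := fun t => h (u + t • (w - u)) + t * (f w - f u)
  have hφ : HasDerivAt φ (h' (w - u) + (f w - f u)) 0 := by
    have hline : HasDerivAt (fun t : ℝ => u + t • (w - u)) (w - u) 0 := by
      simpa using ((hasDerivAt_id (0 : ℝ)).smul_const (w - u)).const_add u
    have hh0 : HasFDerivAt h h' (u + (0 : ℝ) • (w - u)) := by simpa using hh
    exact (hh0.comp_hasDerivAt 0 hline).add (hasDerivAt_mul_const (f w - f u))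
  -- on the segment `f` lies below its chord, so minimality of `u` makes `φ` minimal at `0`
  have hφmin : IsMinOn φ (Icc 0 1) 0 := by
    intro t ⟨ht0, ht1⟩
    have hseg : (1 - t) • u + t • w = u + t • (w - u) := by
      simp only [smul_sub, sub_smul, one_smul]; abel
    have hconv : f (u + t • (w - u)) ≤ (1 - t) * f u + t * f w :=
      hseg ▸ hf.2 hu hw (sub_nonneg.2 ht1) ht0 (by ring)
    have hmin' : f u + h u ≤ f (u + t • (w - u)) + h (u + t • (w - u)) :=
      hmin (hseg ▸ hf.1 hu hw (sub_nonneg.2 ht1) ht0 (by ring))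
    change h (u + (0 : ℝ) • (w - u)) + 0 * (f w - f u) ≤ φ t
    simp only [φ, zero_smul, add_zero, zero_mul]
    linarith
  have hdir : (1 : ℝ) ∈ posTangentConeAt (Icc 0 1) 0 :=
    mem_posTangentConeAt_of_segment_subset (by simp [segment_eq_Icc])
  have hslope := hφmin.localize.hasFDerivWithinAt_nonneg hφ.hasFDerivAt.hasFDerivWithinAt hdir
  simp only [ContinuousLinearMap.toSpanSingleton_apply, one_smul] at hslope
  linarith

theorem hasGradientAt_sub_inner_gradient {H : Type*} [NormedAddCommGroup H]
    [InnerProductSpace ℝ H] [CompleteSpace H] {g : H → ℝ} {u : H}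
    (hg : DifferentiableAt ℝ g u) (x : H) :
    HasGradientAt (fun z => g z - g x - ⟪gradient g x, z - x⟫) (gradient g u - gradient g x) u := by
  rw [hasGradientAt_iff_hasFDerivAt, map_sub, toDual_gradient]
  exact (hg.hasFDerivAt.sub_const (g x)).sub
    ((innerSL ℝ (gradient g x)).hasFDerivAt.comp u ((hasFDerivAt_id u).sub_const x))

theorem bregman_prox_D_firm_general
    {H : Type*} [NormedAddCommGroup H] [InnerProductSpace ℝ H] [CompleteSpace H]
    (g : H → ℝ) (hg : Differentiable ℝ g)
    (f : H → ℝ) (hf : ConvexOn ℝ Set.univ f)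
    (D : H → H → ℝ)
    (hD : ∀ x y, D x y = g x - g y - ⟪gradient g y, x - y⟫)
    (T : H → H)
    (hT : ∀ x u, f (T x) + D (T x) x ≤ f u + D u x) :
    ∀ x y : H,
      ⟪T x - T y, gradient g (T x) - gradient g (T y)⟫
        ≤ ⟪T x - T y, gradient g x - gradient g y⟫ := by
  have hvar : ∀ x y, f (T x) - f (T y) ≤ ⟪gradient g (T x) - gradient g x, T y - T x⟫ :=
    fun x y => hf.sub_le_of_isMinOn_add
      (hasGradientAt_sub_inner_gradient (hg (T x)) x).hasFDerivAt
      (isMinOn_univ_iff.2 fun u => by simpa only [Pi.add_apply, hD] using hT x u)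
      (mem_univ _) (mem_univ _)
  intro x y
  have hxy := hvar x y
  have hyx := hvar y x
  simp only [inner_sub_left, inner_sub_right, real_inner_comm (T x), real_inner_comm (T y)] at hxy hyx ⊢
  linarith

/-- D-firmness of Bregman proximal operators: if `g` is differentiable and
strictly convex on a real Hilbert space, `D_g(x,y) = g(x) − g(y) − ⟪∇g(y), x−y⟫`
is the induced Bregman distance, `f` is proper convex lsc, and
`T(x) = argmin_u [f(u) + D_g(u,x)]`, then for all `x, y`,
`⟪Tx − Ty, ∇g(Tx) − ∇g(Ty)⟫ ≤ ⟪Tx − Ty, ∇g(x) − ∇g(y)⟫`. -/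
theorem bregman_prox_D_firm
    {H : Type*} [NormedAddCommGroup H] [InnerProductSpace ℝ H] [CompleteSpace H]
    (g : H → ℝ) (hg : Differentiable ℝ g) (hgconv : StrictConvexOn ℝ Set.univ g)
    (f : H → ℝ) (hf : ConvexOn ℝ Set.univ f) (hflsc : LowerSemicontinuous f)
    (D : H → H → ℝ)
    (hD : ∀ x y, D x y = g x - g y - ⟪gradient g y, x - y⟫)
    (T : H → H)
    (hT : ∀ x u, f (T x) + D (T x) x ≤ f u + D u x) :
    ∀ x y : H,
      ⟪T x - T y, gradient g (T x) - gradient g (T y)⟫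
        ≤ ⟪T x - T y, gradient g x - gradient g y⟫ :=
  bregman_prox_D_firm_general g hg f hf D hD T hT
end

section
/- Let f and h be proper, lower semicontinuous, convex functions on a finite-dimensional real Hilbert space. Suppose argmin f ∩ dom(h) ≠ ∅, h is coercive and strictly convex, and h is uniformly convex on every closed ball. Then (i) h admits a unique minimizer x₀ over argmin f; (ii) for every ε ∈ (0, 1), the problem argmin_x [f(x) + ε·h(x)] admits a unique solution x_ε; and (iii) x_ε → x₀ as ε → 0. -/
/-!
The minimisers of `f` form a closed convex set, on which the coercive strictly convex `h` has
exactly one minimiser `x₀`; likewise `f + ε h` is coercive and strictly convex, so it has a unique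
minimiser `x_ε`. Comparing `x_ε` with `x₀` gives `h x_ε ≤ h x₀` and
`f x_ε ≤ min f + ε (h x₀ - inf h)`. The first keeps `x_ε` in a compact sublevel set of `h`, the
second forces every cluster point of `x_ε` as `ε → 0⁺` to minimise `f` with value of `h` at most
`h x₀`, hence to be `x₀`.
-/

open Filter Set Topology

theorem StrictConvexOn.smul {𝕜 E β : Type*} [CommSemiring 𝕜] [PartialOrder 𝕜] [AddCommMonoid E]
    [AddCommMonoid β] [PartialOrder β] [SMul 𝕜 E] [Module 𝕜 β] [PosSMulStrictMono 𝕜 β]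
    {s : Set E} {f : E → β} {c : 𝕜} (hc : 0 < c) (hf : StrictConvexOn 𝕜 s f) :
    StrictConvexOn 𝕜 s fun x => c • f x :=
  ⟨hf.1, fun x hx y hy hxy a b ha hb hab =>
    calc
      c • f (a • x + b • y) < c • (a • f x + b • f y) :=
        smul_lt_smul_of_pos_left (hf.2 hx hy hxy ha hb hab) hc
      _ = a • c • f x + b • c • f y := by rw [smul_add, smul_comm c, smul_comm c]⟩

theorem LowerSemicontinuous.isCompact_setOf_le {X α : Type*} [TopologicalSpace X] [LinearOrder α]
    [TopologicalSpace α] [OrderTopology α] [NoMaxOrder α] {g : X → α}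
    (hg : LowerSemicontinuous g) (hco : Tendsto g (cocompact X) atTop) (c : α) :
    IsCompact {x | g x ≤ c} := by
  obtain ⟨K, hK, hKc⟩ := mem_cocompact.1 (hco.eventually (eventually_gt_atTop c))
  exact hK.of_isClosed_subset (hg.isClosed_preimage c) fun x hx =>
    not_not.1 fun hxK => (not_lt.2 hx) (hKc hxK)

theorem StrictConvexOn.existsUnique_isMinOn {E : Type*} [TopologicalSpace E] [AddCommMonoid E]
    [Module ℝ E] {s : Set E} {g : E → ℝ} (hg : StrictConvexOn ℝ s g) (hcont : ContinuousOn g s)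
    (hco : Tendsto g (cocompact E) atTop) (hs : IsClosed s) (hne : s.Nonempty) :
    ∃! x, x ∈ s ∧ IsMinOn g s x := by
  obtain ⟨a, ha⟩ := hne
  obtain ⟨x, hx, hmin⟩ := hcont.exists_isMinOn' hs ha
    ((hco.eventually (eventually_ge_atTop (g a))).filter_mono inf_le_left)
  exact ⟨x, ⟨hx, hmin⟩, fun y hy => hg.eq_of_isMinOn hy.2 hmin hy.1 hx⟩

theorem tendsto_regularized_minimizer {X : Type*} [TopologicalSpace X] {f h : X → ℝ}
    (hf : LowerSemicontinuous f) (hh : LowerSemicontinuous h)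
    (hco : Tendsto h (cocompact X) atTop) (hbdd : BddBelow (range h)) {x₀ : X}
    (hx₀ : ∀ y, f x₀ ≤ f y) (huniq : ∀ y, (∀ z, f y ≤ f z) → h y ≤ h x₀ → y = x₀)
    {sel : ℝ → X} (hsel : ∀ᶠ ε in 𝓝[>] 0, ∀ y, f (sel ε) + ε * h (sel ε) ≤ f y + ε * h y) :
    Tendsto sel (𝓝[>] 0) (𝓝 x₀) := by
  obtain ⟨B, hB⟩ := hbdd
  have hbound : ∀ᶠ ε in 𝓝[>] 0, h (sel ε) ≤ h x₀ ∧ f (sel ε) ≤ f x₀ + ε * (h x₀ - B) := by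
    filter_upwards [hsel, self_mem_nhdsWithin] with ε hε (hε₀ : 0 < ε)
    have := hε x₀
    have := hx₀ (sel ε)
    have := hB (mem_range_self (sel ε))
    constructor <;> nlinarith
  refine (hh.isCompact_setOf_le hco (h x₀)).tendsto_nhds_of_unique_mapClusterPt
    (hbound.mono fun _ => And.left) fun a ha hcl => huniq a (fun z => ?_) ha
  have hgap : Tendsto (fun ε => f x₀ + ε * (h x₀ - B)) (𝓝[>] 0) (𝓝 (f x₀)) := by
    simpa using ((tendsto_id.mul_const (h x₀ - B)).const_add (f x₀)).mono_left
      (nhdsWithin_le_nhds (a := (0 : ℝ)))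
  refine le_trans (le_of_forall_pos_le_add fun δ hδ => ?_) (hx₀ z)
  refine (hf.isClosed_preimage (f x₀ + δ)).mem_of_mapClusterPt hcl ?_
  filter_upwards [hbound, hgap.eventually_lt_const (lt_add_of_pos_right _ hδ)] with ε hε hεδ
  exact hε.2.trans hεδ.le

theorem vanishing_regularization_limit_general
    {E : Type*} [NormedAddCommGroup E] [InnerProductSpace ℝ E]
    [FiniteDimensional ℝ E]
    (f h : E → ℝ)
    (hfconv : ConvexOn ℝ Set.univ f)
    (hargmin : ∃ x : E, ∀ y : E, f x ≤ f y)
    (hcoercive : Tendsto h (Bornology.cobounded E) atTop)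
    (hstrict : StrictConvexOn ℝ Set.univ h) :
    (∃! x₀ : E, (∀ y : E, f x₀ ≤ f y) ∧
        ∀ y : E, (∀ z : E, f y ≤ f z) → h x₀ ≤ h y) ∧
      (∀ ε ∈ Set.Ioo (0 : ℝ) 1,
        ∃! xε : E, ∀ y : E, f xε + ε * h xε ≤ f y + ε * h y) ∧
      (∀ x₀ : E,
        ((∀ y : E, f x₀ ≤ f y) ∧ ∀ y : E, (∀ z : E, f y ≤ f z) → h x₀ ≤ h y) →
        ∀ sel : ℝ → E,
          (∀ ε ∈ Set.Ioo (0 : ℝ) 1,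
            ∀ y : E, f (sel ε) + ε * h (sel ε) ≤ f y + ε * h y) →
          Tendsto sel (nhdsWithin 0 (Set.Ioi 0)) (nhds x₀)) := by
  obtain ⟨xs, hxs⟩ := hargmin
  have hf : Continuous f := continuousOn_univ.1 (hfconv.continuousOn isOpen_univ)
  have hh : Continuous h := continuousOn_univ.1 (hstrict.convexOn.continuousOn isOpen_univ)
  rw [Metric.cobounded_eq_cocompact] at hcoercive
  have hargmin_eq : {y | ∀ z, f y ≤ f z} = {y | f y ≤ f xs} :=
    ext fun y => ⟨fun hy => hy xs, fun hy z => hy.trans (hxs z)⟩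
  have hstrict_argmin : StrictConvexOn ℝ {y | ∀ z, f y ≤ f z} h :=
    hstrict.subset (subset_univ _) (by simpa [hargmin_eq] using hfconv.convex_le (f xs))
  have hargmin_unique := hstrict_argmin.existsUnique_isMinOn hh.continuousOn hcoercive
    (hargmin_eq ▸ isClosed_le hf continuous_const) ⟨xs, hxs⟩
  refine ⟨hargmin_unique, fun ε hε => ?_, fun x₀ hx₀ sel hsel => ?_⟩
  · have hstrictε := hfconv.add_strictConvexOn (hstrict.smul hε.1)
    simpa [isMinOn_univ_iff] using hstrictε.existsUnique_isMinOn
      (hf.add (continuous_const.mul hh)).continuousOn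
      (tendsto_atTop_add_left_of_le _ (f xs) hxs (hcoercive.const_mul_atTop hε.1))
      isClosed_univ univ_nonempty
  · obtain ⟨m, hm⟩ := hh.exists_forall_le hcoercive
    exact tendsto_regularized_minimizer hf.lowerSemicontinuous hh.lowerSemicontinuous hcoercive
      ⟨h m, forall_mem_range.2 hm⟩ hx₀.1
      (fun y hy hle => hargmin_unique.unique ⟨hy, fun z hz => hle.trans (hx₀.2 z hz)⟩ hx₀)
      (mem_of_superset (Ioo_mem_nhdsGT one_pos) hsel)

/-- Vanishing-regularisation limit (Bauschke–Combettes, Thm 26.20): for `f`, `h`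
proper lsc convex on a finite-dimensional real Hilbert space, with
`argmin f ≠ ∅`, `h` coercive, strictly convex and uniformly convex on every
closed ball, (i) `h` has a unique minimiser `x₀` over `argmin f`;
(ii) for each `ε ∈ (0,1)` the problem `min f + ε h` has a unique solution `x_ε`;
(iii) `x_ε → x₀` as `ε → 0⁺`. -/
theorem vanishing_regularization_limit
    {E : Type*} [NormedAddCommGroup E] [InnerProductSpace ℝ E]
    [FiniteDimensional ℝ E]
    (f h : E → ℝ)
    (hfconv : ConvexOn ℝ Set.univ f) (hflsc : LowerSemicontinuous f)
    (hhconv : ConvexOn ℝ Set.univ h) (hhlsc : LowerSemicontinuous h)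
    (hargmin : ∃ x : E, ∀ y : E, f x ≤ f y)
    (hcoercive : Tendsto h (Bornology.cobounded E) atTop)
    (hstrict : StrictConvexOn ℝ Set.univ h)
    (hunif : ∀ R : ℝ, ∃ φ : ℝ → ℝ, (∀ r : ℝ, 0 < r → 0 < φ r) ∧
      UniformConvexOn (Metric.closedBall (0 : E) R) φ h) :
    (∃! x₀ : E, (∀ y : E, f x₀ ≤ f y) ∧
        ∀ y : E, (∀ z : E, f y ≤ f z) → h x₀ ≤ h y) ∧
      (∀ ε ∈ Set.Ioo (0 : ℝ) 1,
        ∃! xε : E, ∀ y : E, f xε + ε * h xε ≤ f y + ε * h y) ∧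
      (∀ x₀ : E,
        ((∀ y : E, f x₀ ≤ f y) ∧ ∀ y : E, (∀ z : E, f y ≤ f z) → h x₀ ≤ h y) →
        ∀ sel : ℝ → E,
          (∀ ε ∈ Set.Ioo (0 : ℝ) 1,
            ∀ y : E, f (sel ε) + ε * h (sel ε) ≤ f y + ε * h y) →
          Tendsto sel (nhdsWithin 0 (Set.Ioi 0)) (nhds x₀)) :=
  vanishing_regularization_limit_general f h hfconv hargmin hcoercive hstrict
end
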